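/- Let ζ > −1/2. Then for all t > 0 and r > 0, the Bessel heat kernel is normalized: ∫₀^∞ p_ζ^{(2)}(t,r,s) · s^{2ζ} ds = 1. -/

import Mathlib

open MeasureTheory

/-- The modified Bessel function of the first kind
`I_ν(z) = Σ_{k≥0} (z/2)^{ν+2k}/(k!·Γ(ν+k+1))`, for `z > 0`. -/
noncomputable def besselI (ν z : ℝ) : ℝ :=
  ∑' k : ℕ, (z / 2) ^ (ν + 2 * (k : ℝ)) / ((k.factorial : ℝ) * Real.Gamma (ν + (k : ℝ) + 1))

/-- The Bessel heat kernel
`p_ζ^{(2)}(t,r,s) = ((rs)^{1/2−ζ}/(2t))·exp(−(r²+s²)/(4t))·I_{ζ−1/2}(rs/(2t))`. -/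
noncomputable def besselHeat (ζ t r s : ℝ) : ℝ :=
  (r * s) ^ ((1 : ℝ) / 2 - ζ) / (2 * t) * Real.exp (-((r ^ 2 + s ^ 2) / (4 * t))) *
    besselI (ζ - 1 / 2) (r * s / (2 * t))

/-- the Bessel heat kernel is normalized with respect to the measure
`s^{2ζ} ds` on `(0,∞)`. -/
theorem besselHeat_normalized (ζ : ℝ) (hζ : -(1:ℝ)/2 < ζ) (t r : ℝ) (ht : 0 < t)
    (hr : 0 < r) :
    ∫ s in Set.Ioi (0:ℝ), besselHeat ζ t r s * s ^ (2 * ζ) = 1 := by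
  have ht4 : (0:ℝ) < 4 * t := by linarith
  set b : ℝ := 1 / (4 * t) with hbdef
  have hb0 : (0:ℝ) < b := by positivity
  set x : ℝ := r ^ 2 / (4 * t) with hxdef
  have hx0 : (0:ℝ) ≤ x := by positivity
  set C : ℕ → ℝ := fun k =>
    r ^ (2 * (k:ℝ)) * (4 * t) ^ ((1:ℝ)/2 - ζ - 2 * (k:ℝ)) / (2 * t) * Real.exp (-x) /
      ((k.factorial : ℝ) * Real.Gamma (ζ - 1/2 + (k:ℝ) + 1)) with hCdef
  set F : ℕ → ℝ → ℝ := fun k s =>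
    C k * (s ^ (2 * ζ + 2 * (k:ℝ)) * Real.exp (-b * s ^ (2:ℝ))) with hFdef
  set G : ℕ → ℝ := fun k => Real.exp (-x) * (x ^ k / (k.factorial : ℝ)) with hGdef
  have hGamma_pos : ∀ k : ℕ, 0 < Real.Gamma (ζ - 1/2 + (k:ℝ) + 1) := by
    intro k
    apply Real.Gamma_pos_of_pos
    have : (0:ℝ) ≤ (k:ℝ) := Nat.cast_nonneg k
    linarith
  have hC_pos : ∀ k, 0 < C k := by
    intro k
    have h1 : (0:ℝ) < r ^ (2 * (k:ℝ)) := Real.rpow_pos_of_pos hr _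
    have h2 : (0:ℝ) < (4*t) ^ ((1:ℝ)/2 - ζ - 2 * (k:ℝ)) := Real.rpow_pos_of_pos ht4 _
    have h3 := hGamma_pos k
    have h4 : (0:ℝ) < (k.factorial : ℝ) := by exact_mod_cast k.factorial_pos
    rw [hCdef]
    positivity
  have hq : ∀ k : ℕ, (-1:ℝ) < 2 * ζ + 2 * (k:ℝ) := by
    intro k
    have : (0:ℝ) ≤ (k:ℝ) := Nat.cast_nonneg k
    linarith
  -- pointwise expansion into the series
  have hpt : ∀ s ∈ Set.Ioi (0:ℝ),
      besselHeat ζ t r s * s ^ (2 * ζ) = ∑' k, F k s := by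
    intro s hs
    rw [Set.mem_Ioi] at hs
    have hu : 0 < r * s := mul_pos hr hs
    have hstep : besselHeat ζ t r s * s ^ (2 * ζ)
        = ∑' k : ℕ, ((r * s) ^ ((1:ℝ)/2 - ζ) / (2 * t)
            * Real.exp (-((r ^ 2 + s ^ 2) / (4 * t))) * s ^ (2 * ζ))
          * ((r * s / (2 * t) / 2) ^ (ζ - 1/2 + 2 * (k:ℝ))
            / ((k.factorial : ℝ) * Real.Gamma (ζ - 1/2 + (k:ℝ) + 1))) := by
      rw [besselHeat, besselI, mul_right_comm]
      exact tsum_mul_left.symm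
    rw [hstep]
    refine tsum_congr fun k => ?_
    have h1 : r * s / (2 * t) / 2 = r * s / (4 * t) := by ring
    have h2 : (r * s / (4 * t)) ^ (ζ - 1/2 + 2 * (k:ℝ))
        = (r * s) ^ (ζ - 1/2 + 2 * (k:ℝ)) / (4 * t) ^ (ζ - 1/2 + 2 * (k:ℝ)) :=
      Real.div_rpow hu.le ht4.le _
    have h3 : (r * s) ^ ((1:ℝ)/2 - ζ) * (r * s) ^ (ζ - 1/2 + 2 * (k:ℝ))
        = (r * s) ^ (2 * (k:ℝ)) := by
      rw [← Real.rpow_add hu]; congr 1; ring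
    have h4 : (r * s) ^ (2 * (k:ℝ)) = r ^ (2 * (k:ℝ)) * s ^ (2 * (k:ℝ)) :=
      Real.mul_rpow hr.le hs.le
    have h5 : s ^ (2 * ζ + 2 * (k:ℝ)) = s ^ (2 * ζ) * s ^ (2 * (k:ℝ)) :=
      Real.rpow_add hs _ _
    have hs2 : s ^ (2:ℝ) = s ^ 2 := by
      rw [show (2:ℝ) = ((2:ℕ):ℝ) by norm_num, Real.rpow_natCast]
    have h6 : Real.exp (-((r ^ 2 + s ^ 2) / (4 * t)))
        = Real.exp (-x) * Real.exp (-b * s ^ (2:ℝ)) := by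
      rw [← Real.exp_add, hs2, hxdef, hbdef]
      congr 1
      field_simp
      ring
    have h7 : (4 * t) ^ ((1:ℝ)/2 - ζ - 2 * (k:ℝ))
        = ((4 * t) ^ (ζ - 1/2 + 2 * (k:ℝ)))⁻¹ := by
      rw [show (1:ℝ)/2 - ζ - 2 * (k:ℝ) = -(ζ - 1/2 + 2 * (k:ℝ)) by ring,
        Real.rpow_neg ht4.le]
    rw [hFdef, hCdef]
    simp only
    rw [h1, h2, h5, h6, h7]
    have key : (r * s) ^ ((1:ℝ)/2 - ζ) * (r * s) ^ (ζ - 1/2 + 2 * (k:ℝ))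
        = r ^ (2 * (k:ℝ)) * s ^ (2 * (k:ℝ)) := h3.trans h4
    linear_combination (Real.exp (-x) * Real.exp (-b * s ^ (2:ℝ)) * s ^ (2 * ζ)
        * (2 * t)⁻¹ * ((4 * t) ^ (ζ - 1/2 + 2 * (k:ℝ)))⁻¹
        * ((k.factorial : ℝ) * Real.Gamma (ζ - 1/2 + (k:ℝ) + 1))⁻¹) * key
  -- integrability of each term
  have hint : ∀ k : ℕ, IntegrableOn (F k) (Set.Ioi (0:ℝ)) := by
    intro k
    exact (integrableOn_rpow_mul_exp_neg_mul_rpow (hq k) two_pos hb0).const_mul (C k)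
  -- value of each integral
  have hval : ∀ k : ℕ, ∫ s in Set.Ioi (0:ℝ), F k s = G k := by
    intro k
    have hG := (hGamma_pos k).ne'
    have hfac : ((k.factorial : ℝ)) ≠ 0 := by exact_mod_cast k.factorial_ne_zero
    have h4tk : ((4:ℝ) * t) ^ k ≠ 0 := pow_ne_zero _ ht4.ne'
    rw [hFdef]
    simp only
    rw [MeasureTheory.integral_const_mul,
      integral_rpow_mul_exp_neg_mul_rpow two_pos (hq k) hb0]
    have e1 : b ^ (-(2 * ζ + 2 * (k:ℝ) + 1) / 2) = (4 * t) ^ (ζ + (k:ℝ) + 1/2) := by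
      rw [hbdef, one_div, Real.inv_rpow ht4.le, ← Real.rpow_neg ht4.le]
      congr 1; ring
    have e2 : Real.Gamma ((2 * ζ + 2 * (k:ℝ) + 1) / 2)
        = Real.Gamma (ζ - 1/2 + (k:ℝ) + 1) := by
      congr 1; ring
    have e3 : (4 * t) ^ ((1:ℝ)/2 - ζ - 2 * (k:ℝ)) * (4 * t) ^ (ζ + (k:ℝ) + 1/2)
        = (4 * t) * ((4 * t) ^ k)⁻¹ := by
      rw [← Real.rpow_add ht4, show (1:ℝ)/2 - ζ - 2*(k:ℝ) + (ζ + (k:ℝ) + 1/2)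
        = 1 + (-(k:ℝ)) by ring, Real.rpow_add ht4, Real.rpow_one,
        Real.rpow_neg ht4.le, Real.rpow_natCast]
    have e4 : r ^ (2 * (k:ℝ)) = (r ^ 2) ^ k := by
      rw [show (2:ℝ) * (k:ℝ) = ((2 * k : ℕ) : ℝ) by push_cast; ring,
        Real.rpow_natCast, pow_mul]
    have e5 : x ^ k = (r ^ 2) ^ k / (4 * t) ^ k := by
      rw [hxdef, div_pow]
    have key : r ^ (2 * (k:ℝ)) * ((4 * t) ^ ((1:ℝ)/2 - ζ - 2 * (k:ℝ))
          * (4 * t) ^ (ζ + (k:ℝ) + 1/2)) * (1 / (2 * t)) * (1/2) = x ^ k := by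
      rw [e3, e4, e5]
      field_simp
      ring
    rw [e1, e2, hCdef, hGdef]
    simp only
    have hDΓ : ∀ a : ℝ, a / ((k.factorial : ℝ) * Real.Gamma (ζ - 1/2 + (k:ℝ) + 1))
        * Real.Gamma (ζ - 1/2 + (k:ℝ) + 1) = a / (k.factorial : ℝ) := by
      intro a
      rw [div_mul_eq_mul_div, mul_div_mul_right _ _ hG]
    calc r ^ (2 * (k:ℝ)) * (4 * t) ^ ((1:ℝ)/2 - ζ - 2 * (k:ℝ)) / (2 * t) * Real.exp (-x)
          / ((k.factorial : ℝ) * Real.Gamma (ζ - 1/2 + (k:ℝ) + 1))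
          * ((4 * t) ^ (ζ + (k:ℝ) + 1/2) * (1/2) * Real.Gamma (ζ - 1/2 + (k:ℝ) + 1))
        = (r ^ (2 * (k:ℝ)) * (4 * t) ^ ((1:ℝ)/2 - ζ - 2 * (k:ℝ)) / (2 * t) * Real.exp (-x)
            * ((4 * t) ^ (ζ + (k:ℝ) + 1/2) * (1/2)))
          / ((k.factorial : ℝ) * Real.Gamma (ζ - 1/2 + (k:ℝ) + 1))
          * Real.Gamma (ζ - 1/2 + (k:ℝ) + 1) := by ring
      _ = (r ^ (2 * (k:ℝ)) * (4 * t) ^ ((1:ℝ)/2 - ζ - 2 * (k:ℝ)) / (2 * t) * Real.exp (-x)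
            * ((4 * t) ^ (ζ + (k:ℝ) + 1/2) * (1/2))) / (k.factorial : ℝ) := hDΓ _
      _ = Real.exp (-x) * ((r ^ (2 * (k:ℝ)) * ((4 * t) ^ ((1:ℝ)/2 - ζ - 2 * (k:ℝ))
            * (4 * t) ^ (ζ + (k:ℝ) + 1/2)) * (1 / (2 * t)) * (1/2)) / (k.factorial : ℝ)) := by
          ring
      _ = Real.exp (-x) * (x ^ k / (k.factorial : ℝ)) := by rw [key]
  -- summability of the norms
  have hGsum : Summable G := by
    rw [hGdef]
    exact (Real.summable_pow_div_factorial x).mul_left _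
  have hnorm : ∀ k : ℕ, (∫ s in Set.Ioi (0:ℝ), ‖F k s‖) = G k := by
    intro k
    rw [← hval k]
    refine setIntegral_congr_fun measurableSet_Ioi fun s hs => ?_
    have hsp : (0:ℝ) < s := hs
    have hCk := hC_pos k
    refine Real.norm_of_nonneg ?_
    rw [hFdef]
    positivity
  calc ∫ s in Set.Ioi (0:ℝ), besselHeat ζ t r s * s ^ (2 * ζ)
      = ∫ s in Set.Ioi (0:ℝ), ∑' k, F k s :=
        setIntegral_congr_fun measurableSet_Ioi hpt
    _ = ∑' k, ∫ s in Set.Ioi (0:ℝ), F k s :=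
        (MeasureTheory.integral_tsum_of_summable_integral_norm (fun k => hint k)
          (hGsum.congr fun k => (hnorm k).symm)).symm
    _ = ∑' k, G k := tsum_congr hval
    _ = 1 := by
        rw [hGdef]
        rw [tsum_mul_left]
        have hexp : (∑' k : ℕ, x ^ k / (k.factorial : ℝ)) = Real.exp x := by
          rw [Real.exp_eq_exp_ℝ, NormedSpace.exp_eq_tsum_div]
        rw [hexp, ← Real.exp_add]
        simp
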